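/- Consider f(x, y) = −x y e^{−x²−y²} + (1/2) y² on ℝ², the feasible set K = {(x, y) ∈ ℝ² : x + y ≤ 0}, and the projected gradient descent map T(p) = P_K(p − ᾱ∇f(p)) with constant step size 0 < ᾱ < 2/3. Then there exists ε > 0 such that for every initial point (x₀, y₀) in the set B_ε = {(x, y) : 0.5 − ε ≤ x ≤ 0.5 and −0.5 − ε ≤ y ≤ −0.5}, the projected gradient descent sequence (x_{k+1}, y_{k+1}) = T(x_k, y_k) converges to the origin (0, 0). -/

import Mathlib

/-- The objective `f(x, y) = −x y e^{−x²−y²} + (1/2) y²`. -/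
noncomputable def fObj (p : ℝ × ℝ) : ℝ :=
  -(p.1 * p.2) * Real.exp (-p.1 ^ 2 - p.2 ^ 2) + p.2 ^ 2 / 2

/-- The gradient `∇f(x, y)` of the objective `fObj`. -/
noncomputable def gradF (p : ℝ × ℝ) : ℝ × ℝ :=
  (-(1 - 2 * p.1 ^ 2) * p.2 * Real.exp (-p.1 ^ 2 - p.2 ^ 2),
   -(1 - 2 * p.2 ^ 2) * p.1 * Real.exp (-p.1 ^ 2 - p.2 ^ 2) + p.2)

/-- Euclidean metric projection onto the half-plane `K = {(x, y) : x + y ≤ 0}`. -/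
noncomputable def projK (q : ℝ × ℝ) : ℝ × ℝ :=
  if q.1 + q.2 ≤ 0 then q else (q.1 - (q.1 + q.2) / 2, q.2 - (q.1 + q.2) / 2)

/-- One step of projected gradient descent with step size `a`: `T(p) = P_K(p − a ∇f(p))`. -/
noncomputable def Tmap (a : ℝ) (p : ℝ × ℝ) : ℝ × ℝ :=
  projK (p - a • gradF p)

/-!
Near `(1/2, -1/2)` the gradient satisfies `∂ₓf + ∂ᵧf ≤ -23/250`, so one gradient step leaves `K`
by more than the initial distance `≤ 2ε ≤ a/25` and the projection puts the first iterate on the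
boundary line `y = -x`, at some `0 < w ≤ 11/20`. On that line `T(x, -x) = (x', -x')` with
`x' = x (1 - a h(x))`, `h = antidiagRate`, and `1/2 ≤ h(x) ≤ 3/2` for `x² ≤ 1/2`, so for
`a < 2/3` the iterates stay on the line and decay geometrically with ratio `1 - a/2`.
-/

open Filter Topology

/-- `f(x, -x) = x² e^{-2x²} + x²/2` has derivative `2x · antidiagRate x`. -/
noncomputable def antidiagRate (x : ℝ) : ℝ :=
  (1 - 2 * x ^ 2) * Real.exp (-(2 * x ^ 2)) + 1 / 2

lemma one_half_le_antidiagRate {x : ℝ} (hx : x ^ 2 ≤ 1 / 2) : 1 / 2 ≤ antidiagRate x := by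
  have : 0 ≤ (1 - 2 * x ^ 2) * Real.exp (-(2 * x ^ 2)) :=
    mul_nonneg (by linarith) (Real.exp_pos _).le
  unfold antidiagRate; linarith

lemma antidiagRate_le (x : ℝ) : antidiagRate x ≤ 3 / 2 := by
  have hE : Real.exp (-(2 * x ^ 2)) ≤ 1 := Real.exp_le_one_iff.mpr (by nlinarith [sq_nonneg x])
  unfold antidiagRate
  nlinarith [mul_nonneg (sq_nonneg x) (Real.exp_pos (-(2 * x ^ 2))).le]

lemma projK_of_pos {q : ℝ × ℝ} (hq : 0 < q.1 + q.2) :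
    projK q = ((q.1 - q.2) / 2, -((q.1 - q.2) / 2)) := by
  rw [projK, if_neg hq.not_ge, Prod.mk.injEq]
  constructor <;> ring

lemma Tmap_antidiag {a x : ℝ} (ha : 0 < a) (hx : 0 < x) :
    Tmap a (x, -x) = (x * (1 - a * antidiagRate x), -(x * (1 - a * antidiagRate x))) := by
  have hE : -x ^ 2 - (-x) ^ 2 = -(2 * x ^ 2) := by ring
  rw [Tmap, projK_of_pos] <;>
    simp only [gradF, hE, antidiagRate, Prod.fst_sub, Prod.snd_sub, Prod.smul_fst,
      Prod.smul_snd, smul_eq_mul]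
  · rw [Prod.mk.injEq]; constructor <;> ring
  · ring_nf; positivity

lemma antidiagRate_contraction {a x : ℝ} (ha0 : 0 < a) (ha : a < 2 / 3) (hx : 0 < x)
    (hx2 : x ^ 2 ≤ 1 / 2) :
    0 < x * (1 - a * antidiagRate x) ∧ x * (1 - a * antidiagRate x) ≤ (1 - a / 2) * x := by
  have hlo := one_half_le_antidiagRate hx2
  have hhi := antidiagRate_le x
  constructor
  · have : a * antidiagRate x < 1 := by nlinarith
    nlinarith
  · nlinarith [mul_nonneg hx.le (mul_nonneg ha0.le (sub_nonneg.2 hlo))]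

lemma Tmap_iterate_antidiag {a w : ℝ} {z : ℕ → ℝ × ℝ} (ha0 : 0 < a) (ha : a < 2 / 3)
    (hw0 : 0 < w) (hw : w ^ 2 ≤ 1 / 2) (hz0 : z 0 = (w, -w))
    (hz : ∀ k, z (k + 1) = Tmap a (z k)) (k : ℕ) :
    ∃ v, 0 < v ∧ v ≤ (1 - a / 2) ^ k * w ∧ z k = (v, -v) := by
  induction k with
  | zero => exact ⟨w, hw0, by simp, hz0⟩
  | succ k ih =>
    obtain ⟨v, hv0, hvk, hzk⟩ := ih
    have hvw : v ≤ w := hvk.trans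
      (mul_le_of_le_one_left hw0.le (pow_le_one₀ (by linarith) (by linarith)))
    obtain ⟨hpos, hle⟩ := antidiagRate_contraction ha0 ha hv0 (by nlinarith)
    refine ⟨_, hpos, ?_, by rw [hz, hzk, Tmap_antidiag ha0 hv0]⟩
    calc v * (1 - a * antidiagRate v) ≤ (1 - a / 2) * v := hle
      _ ≤ (1 - a / 2) * ((1 - a / 2) ^ k * w) := by gcongr; linarith
      _ = (1 - a / 2) ^ (k + 1) * w := by ring

lemma tendsto_zero_of_antidiag_start {a w : ℝ} {z : ℕ → ℝ × ℝ} (ha0 : 0 < a) (ha : a < 2 / 3)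
    (hw0 : 0 < w) (hw : w ^ 2 ≤ 1 / 2) (hz0 : z 0 = (w, -w))
    (hz : ∀ k, z (k + 1) = Tmap a (z k)) :
    Tendsto z atTop (𝓝 (0, 0)) := by
  choose v hv0 hvk hzk using Tmap_iterate_antidiag ha0 ha hw0 hw hz0 hz
  have hgeo : Tendsto (fun k : ℕ => (1 - a / 2) ^ k * w) atTop (𝓝 0) := by
    simpa using (tendsto_pow_atTop_nhds_zero_of_lt_one (by linarith) (by linarith)).mul_const w
  have hv : Tendsto v atTop (𝓝 0) := squeeze_zero (fun k => (hv0 k).le) hvk hgeo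
  rw [funext hzk]
  simpa using hv.prodMk_nhds hv.neg

lemma gradF_fst_mem {x y : ℝ} (hx1 : 2 / 5 ≤ x) (hx2 : x ≤ 1 / 2) (hy1 : -3 / 5 ≤ y)
    (hy2 : y ≤ 0) : 0 ≤ (gradF (x, y)).1 ∧ (gradF (x, y)).1 ≤ 51 / 125 := by
  have hE0 := Real.exp_pos (-x ^ 2 - y ^ 2)
  have hE1 : Real.exp (-x ^ 2 - y ^ 2) ≤ 1 :=
    Real.exp_le_one_iff.mpr (by nlinarith [sq_nonneg x, sq_nonneg y])
  have hu : 0 ≤ (1 - 2 * x ^ 2) * -y := mul_nonneg (by nlinarith) (by linarith)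
  have hu' : (1 - 2 * x ^ 2) * -y ≤ 17 / 25 * (3 / 5) :=
    mul_le_mul (by nlinarith) (by linarith) (by linarith) (by norm_num)
  simp only [gradF]
  constructor <;> nlinarith [mul_nonneg hu hE0.le, mul_le_mul hu' hE1 hE0.le (by norm_num)]

lemma gradF_snd_mem {x y : ℝ} (hx1 : 0 ≤ x) (hx2 : x ≤ 1 / 2) (hy1 : -3 / 5 ≤ y)
    (hy2 : y ≤ -1 / 2) : -17 / 20 ≤ (gradF (x, y)).2 ∧ (gradF (x, y)).2 ≤ -1 / 2 := by
  have hE0 := Real.exp_pos (-x ^ 2 - y ^ 2)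
  have hE1 : Real.exp (-x ^ 2 - y ^ 2) ≤ 1 :=
    Real.exp_le_one_iff.mpr (by nlinarith [sq_nonneg x, sq_nonneg y])
  have hu : 0 ≤ (1 - 2 * y ^ 2) * x := mul_nonneg (by nlinarith) hx1
  have hu' : (1 - 2 * y ^ 2) * x ≤ 1 / 2 * (1 / 2) :=
    mul_le_mul (by nlinarith) hx2 hx1 (by norm_num)
  simp only [gradF]
  constructor <;> nlinarith [mul_nonneg hu hE0.le, mul_le_mul hu' hE1 hE0.le (by norm_num)]

lemma Tmap_mem_antidiag {a x y : ℝ} (ha0 : 0 < a) (ha : a < 2 / 3) (hx1 : 2 / 5 ≤ x)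
    (hx2 : x ≤ 1 / 2) (hy1 : -3 / 5 ≤ y) (hy2 : y ≤ -1 / 2) (hxy : -(a / 25) ≤ x + y) :
    ∃ w, Tmap a (x, y) = (w, -w) ∧ 0 < w ∧ w ^ 2 ≤ 1 / 2 := by
  obtain ⟨hg1, hg1'⟩ := gradF_fst_mem hx1 hx2 hy1 (by linarith)
  obtain ⟨hg2, hg2'⟩ := gradF_snd_mem (by linarith) hx2 hy1 hy2
  set g := gradF (x, y)
  have hdiff : a * (g.1 - g.2) ≤ 2 / 3 * (629 / 500) :=
    mul_le_mul ha.le (by linarith) (by linarith) (by norm_num)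
  have hw0 : 0 < (x - y - a * (g.1 - g.2)) / 2 := by linarith
  have hw1 : (x - y - a * (g.1 - g.2)) / 2 ≤ 11 / 20 := by nlinarith
  refine ⟨(x - y - a * (g.1 - g.2)) / 2, ?_, hw0, by nlinarith⟩
  rw [Tmap, projK_of_pos]
  · simp only [Prod.fst_sub, Prod.snd_sub, Prod.smul_fst, Prod.smul_snd, smul_eq_mul,
      Prod.mk.injEq]
    constructor <;> ring
  · simp only [Prod.fst_sub, Prod.snd_sub, Prod.smul_fst, Prod.smul_snd, smul_eq_mul]
    nlinarith

theorem stmt_6 (a : ℝ) (ha0 : 0 < a) (ha : a < 2 / 3) :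
    ∃ ε > (0 : ℝ), ∀ z : ℕ → ℝ × ℝ,
      0.5 - ε ≤ (z 0).1 → (z 0).1 ≤ 0.5 →
      -0.5 - ε ≤ (z 0).2 → (z 0).2 ≤ -0.5 →
      (∀ k, z (k + 1) = Tmap a (z k)) →
      Filter.Tendsto z Filter.atTop (nhds ((0 : ℝ), (0 : ℝ))) := by
  refine ⟨min (1 / 10) (a / 50), lt_min (by norm_num) (by linarith), ?_⟩
  intro z hx1 hx2 hy1 hy2 hz
  have hε₁ := min_le_left (1 / 10 : ℝ) (a / 50)
  have hε₂ := min_le_right (1 / 10 : ℝ) (a / 50)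
  norm_num at hx1 hx2 hy1 hy2
  obtain ⟨w, hw, hw0, hw2⟩ := Tmap_mem_antidiag (x := (z 0).1) (y := (z 0).2) ha0 ha
    (by linarith) hx2 (by linarith) (by linarith) (by linarith)
  have hz1 : z 1 = (w, -w) := by rw [hz 0, ← hw]
  exact (tendsto_add_atTop_iff_nat 1).mp
    (tendsto_zero_of_antidiag_start ha0 ha hw0 hw2 hz1 fun k => hz (k + 1))
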